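/- Every reverse depth-respecting bisimulation between stable configuration structures is a reverse step bisimulation; hence reverse depth-respecting bisimulation equivalence is included in reverse step bisimulation equivalence. -/

import Mathlib

universe u v

/-- A configuration structure over event type `E` and label alphabet `L`:
a family of finite sets of events (configurations) with a labelling. -/
structure CS (E : Type u) (L : Type v) where
  C : Set (Set E)
  finite : ∀ X ∈ C, X.Finite
  label : E → L

namespace CS

variable {E E₁ E₂ : Type u} {L : Type v}

/-- Stability: rooted, connected, closed under bounded unions and intersections. -/
def IsStable (𝒞 : CS E L) : Prop :=
  ∅ ∈ 𝒞.C ∧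
  (∀ X ∈ 𝒞.C, X ≠ ∅ → ∃ e ∈ X, X \ {e} ∈ 𝒞.C) ∧
  (∀ X ∈ 𝒞.C, ∀ Y ∈ 𝒞.C, ∀ Z ∈ 𝒞.C, X ∪ Y ⊆ Z → X ∪ Y ∈ 𝒞.C) ∧
  (∀ X ∈ 𝒞.C, ∀ Y ∈ 𝒞.C, ∀ Z ∈ 𝒞.C, X ∪ Y ⊆ Z → X ∩ Y ∈ 𝒞.C)

/-- Causality: `d ≤_X e` iff every sub-configuration of `X` containing `e` contains `d`. -/
def le (𝒞 : CS E L) (X : Set E) (d e : E) : Prop :=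
  ∀ Y ∈ 𝒞.C, Y ⊆ X → e ∈ Y → d ∈ Y

/-- Strict causality `d <_X e`. -/
def lt (𝒞 : CS E L) (X : Set E) (d e : E) : Prop :=
  le 𝒞 X d e ∧ d ≠ e

/-- Concurrency within a configuration. -/
def co (𝒞 : CS E L) (X : Set E) (d e : E) : Prop :=
  ¬ lt 𝒞 X d e ∧ ¬ lt 𝒞 X e d

/-- The set of minimal events of a configuration. -/
def minE (𝒞 : CS E L) (X : Set E) : Set E :=
  {e | e ∈ X ∧ ∀ d ∈ X, ¬ lt 𝒞 X d e}

/-- Depth of an event in a configuration: the length of the longest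
causal chain (w.r.t. `<_X`) in `X` up to and including `e`. -/
noncomputable def depth (𝒞 : CS E L) (X : Set E) (e : E) : ℕ :=
  sSup {n | ∃ l : List E, l.length = n ∧ l.Chain' (lt 𝒞 X) ∧
    (∀ x ∈ l, x ∈ X) ∧ l.getLast? = some e}

/-- Multiset of labels of a (finite) set of events. -/
noncomputable def labelMS (𝒞 : CS E L) (S : Set E) : Multiset L := by
  classical exact if h : S.Finite then h.toFinset.val.map 𝒞.label else 0

/-- Single-event forward transition `X —a→ X'`. -/
def FTrans (𝒞 : CS E L) (a : L) (X X' : Set E) : Prop :=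
  X ∈ 𝒞.C ∧ X' ∈ 𝒞.C ∧ X ⊆ X' ∧ ∃ e, X' \ X = {e} ∧ 𝒞.label e = a

/-- Single-event reverse transition `X ⇝a X'`. -/
def RTrans (𝒞 : CS E L) (a : L) (X X' : Set E) : Prop :=
  FTrans 𝒞 a X' X

/-- Step transition `X —A→ X'`: the added events are pairwise concurrent
in `X'` and carry the label multiset `A`. -/
def Step (𝒞 : CS E L) (A : Multiset L) (X X' : Set E) : Prop :=
  X ∈ 𝒞.C ∧ X' ∈ 𝒞.C ∧ X ⊆ X' ∧ ∃ F : Finset E, ↑F = X' \ X ∧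
    (∀ d ∈ F, ∀ e ∈ F, co 𝒞 X' d e) ∧ F.val.map 𝒞.label = A

/-- Reverse step transition `X ⇝A X'`. -/
def RStep (𝒞 : CS E L) (A : Multiset L) (X X' : Set E) : Prop :=
  Step 𝒞 A X' X

/-- Equidepth step: all added events have the same depth in `X'`. -/
def EqStep (𝒞 : CS E L) (A : Multiset L) (X X' : Set E) : Prop :=
  Step 𝒞 A X X' ∧ ∀ d ∈ X' \ X, ∀ e ∈ X' \ X, depth 𝒞 X' d = depth 𝒞 X' e

/-- Reverse equidepth step `X ⇝A= X'`. -/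
def REqStep (𝒞 : CS E L) (A : Multiset L) (X X' : Set E) : Prop :=
  EqStep 𝒞 A X' X

/-- Single-event forward transition with depth: the new event has label `a`
and depth `k` in `X'`. -/
def FTransD (𝒞 : CS E L) (a : L) (k : ℕ) (X X' : Set E) : Prop :=
  X ∈ 𝒞.C ∧ X' ∈ 𝒞.C ∧ X ⊆ X' ∧
    ∃ e, X' \ X = {e} ∧ 𝒞.label e = a ∧ depth 𝒞 X' e = k

/-- Single-event reverse transition with depth. -/
def RTransD (𝒞 : CS E L) (a : L) (k : ℕ) (X X' : Set E) : Prop :=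
  FTransD 𝒞 a k X' X

/-- A multiset of labels is homogeneous if all its elements are equal. -/
def Hom (A : Multiset L) : Prop := ∀ a ∈ A, ∀ b ∈ A, a = b

/-- `R` is a relation between configurations of `𝒞` and `𝒟`, containing `(∅, ∅)`. -/
def Dom (𝒞 : CS E₁ L) (𝒟 : CS E₂ L) (R : Set E₁ → Set E₂ → Prop) : Prop :=
  R ∅ ∅ ∧ ∀ X Y, R X Y → X ∈ 𝒞.C ∧ Y ∈ 𝒟.C

/-- Interleaving bisimulation. -/
def IsIB (𝒞 : CS E₁ L) (𝒟 : CS E₂ L) (R : Set E₁ → Set E₂ → Prop) : Prop :=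
  Dom 𝒞 𝒟 R ∧ ∀ X Y, R X Y →
    (∀ a X', FTrans 𝒞 a X X' → ∃ Y', FTrans 𝒟 a Y Y' ∧ R X' Y') ∧
    (∀ a Y', FTrans 𝒟 a Y Y' → ∃ X', FTrans 𝒞 a X X' ∧ R X' Y')

/-- Reverse bisimulation: an IB also matching reverse single-event transitions. -/
def IsRB (𝒞 : CS E₁ L) (𝒟 : CS E₂ L) (R : Set E₁ → Set E₂ → Prop) : Prop :=
  IsIB 𝒞 𝒟 R ∧ ∀ X Y, R X Y →
    (∀ a X', RTrans 𝒞 a X X' → ∃ Y', RTrans 𝒟 a Y Y' ∧ R X' Y') ∧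
    (∀ a Y', RTrans 𝒟 a Y Y' → ∃ X', RTrans 𝒞 a X X' ∧ R X' Y')

/-- Step bisimulation. -/
def IsSB (𝒞 : CS E₁ L) (𝒟 : CS E₂ L) (R : Set E₁ → Set E₂ → Prop) : Prop :=
  Dom 𝒞 𝒟 R ∧ ∀ X Y, R X Y →
    (∀ A X', Step 𝒞 A X X' → ∃ Y', Step 𝒟 A Y Y' ∧ R X' Y') ∧
    (∀ A Y', Step 𝒟 A Y Y' → ∃ X', Step 𝒞 A X X' ∧ R X' Y')

/-- Reverse step bisimulation: an SB also matching reverse steps. -/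
def IsRSB (𝒞 : CS E₁ L) (𝒟 : CS E₂ L) (R : Set E₁ → Set E₂ → Prop) : Prop :=
  IsSB 𝒞 𝒟 R ∧ ∀ X Y, R X Y →
    (∀ A X', RStep 𝒞 A X X' → ∃ Y', RStep 𝒟 A Y Y' ∧ R X' Y') ∧
    (∀ A Y', RStep 𝒟 A Y Y' → ∃ X', RStep 𝒞 A X X' ∧ R X' Y')

/-- Reverse homogeneous step bisimulation: matches forward single-event
transitions and reverse homogeneous steps. -/
def IsRHSB (𝒞 : CS E₁ L) (𝒟 : CS E₂ L) (R : Set E₁ → Set E₂ → Prop) : Prop :=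
  Dom 𝒞 𝒟 R ∧ ∀ X Y, R X Y →
    (∀ a X', FTrans 𝒞 a X X' → ∃ Y', FTrans 𝒟 a Y Y' ∧ R X' Y') ∧
    (∀ a Y', FTrans 𝒟 a Y Y' → ∃ X', FTrans 𝒞 a X X' ∧ R X' Y') ∧
    (∀ A X', Hom A → RStep 𝒞 A X X' → ∃ Y', RStep 𝒟 A Y Y' ∧ R X' Y') ∧
    (∀ A Y', Hom A → RStep 𝒟 A Y Y' → ∃ X', RStep 𝒞 A X X' ∧ R X' Y')

/-- Reverse homogeneous equidepth step bisimulation. -/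
def IsRHESB (𝒞 : CS E₁ L) (𝒟 : CS E₂ L) (R : Set E₁ → Set E₂ → Prop) : Prop :=
  Dom 𝒞 𝒟 R ∧ ∀ X Y, R X Y →
    (∀ a X', FTrans 𝒞 a X X' → ∃ Y', FTrans 𝒟 a Y Y' ∧ R X' Y') ∧
    (∀ a Y', FTrans 𝒟 a Y Y' → ∃ X', FTrans 𝒞 a X X' ∧ R X' Y') ∧
    (∀ A X', Hom A → REqStep 𝒞 A X X' → ∃ Y', REqStep 𝒟 A Y Y' ∧ R X' Y') ∧
    (∀ A Y', Hom A → REqStep 𝒟 A Y Y' → ∃ X', REqStep 𝒞 A X X' ∧ R X' Y')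

/-- Depth-respecting bisimulation. -/
def IsDB (𝒞 : CS E₁ L) (𝒟 : CS E₂ L) (R : Set E₁ → Set E₂ → Prop) : Prop :=
  Dom 𝒞 𝒟 R ∧ ∀ X Y, R X Y →
    (∀ a k X', FTransD 𝒞 a k X X' → ∃ Y', FTransD 𝒟 a k Y Y' ∧ R X' Y') ∧
    (∀ a k Y', FTransD 𝒟 a k Y Y' → ∃ X', FTransD 𝒞 a k X X' ∧ R X' Y')

/-- Reverse depth-respecting bisimulation. -/
def IsRDB (𝒞 : CS E₁ L) (𝒟 : CS E₂ L) (R : Set E₁ → Set E₂ → Prop) : Prop :=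
  IsDB 𝒞 𝒟 R ∧ ∀ X Y, R X Y →
    (∀ a k X', RTransD 𝒞 a k X X' → ∃ Y', RTransD 𝒟 a k Y Y' ∧ R X' Y') ∧
    (∀ a k Y', RTransD 𝒟 a k Y Y' → ∃ X', RTransD 𝒞 a k X X' ∧ R X' Y')

/-- The lifting of a configuration structure w.r.t. a configuration `M`. -/
def lift (𝒞 : CS E L) (M : Set E) : CS E L where
  C := {Z | ∃ X, X ∈ 𝒞.C ∧ M ⊆ X ∧ minE 𝒞 X = minE 𝒞 M ∧ Z = X \ M}
  finite := by
    rintro Z ⟨X, hX, -, -, rfl⟩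
    exact (𝒞.finite X hX).subset Set.diff_subset
  label := 𝒞.label

/-- Events of `X` of depth at most `n`. -/
def levelLe (𝒞 : CS E L) (X : Set E) (n : ℕ) : Set E :=
  {e | e ∈ X ∧ depth 𝒞 X e ≤ n}

/-- Events of `X` of depth exactly `n`. -/
def levelEq (𝒞 : CS E L) (X : Set E) (n : ℕ) : Set E :=
  {e | e ∈ X ∧ depth 𝒞 X e = n}

/-- No equidepth auto-concurrency: distinct concurrent events never share
both label and depth. -/
def NoEqAC (𝒞 : CS E L) : Prop :=
  ∀ X ∈ 𝒞.C, ∀ d ∈ X, ∀ e ∈ X, co 𝒞 X d e → 𝒞.label d = 𝒞.label e →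
    depth 𝒞 X d = depth 𝒞 X e → d = e

/-- `f` (a set of pairs) is a label- and order-preserving isomorphism
between configurations `X` and `Y`. -/
def IsIso (𝒞 : CS E₁ L) (𝒟 : CS E₂ L) (X : Set E₁) (Y : Set E₂)
    (f : Set (E₁ × E₂)) : Prop :=
  (∀ p ∈ f, p.1 ∈ X ∧ p.2 ∈ Y) ∧
  (∀ d ∈ X, ∃! e, (d, e) ∈ f) ∧
  (∀ e ∈ Y, ∃! d, (d, e) ∈ f) ∧
  (∀ p ∈ f, 𝒞.label p.1 = 𝒟.label p.2) ∧
  (∀ p ∈ f, ∀ q ∈ f, (lt 𝒞 X p.1 q.1 ↔ lt 𝒟 Y p.2 q.2))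

/-- Hereditary history-preserving bisimulation. -/
def IsHH (𝒞 : CS E₁ L) (𝒟 : CS E₂ L)
    (R : Set (Set E₁ × Set E₂ × Set (E₁ × E₂))) : Prop :=
  (∅, ∅, ∅) ∈ R ∧
  ∀ X Y f, (X, Y, f) ∈ R →
    X ∈ 𝒞.C ∧ Y ∈ 𝒟.C ∧ IsIso 𝒞 𝒟 X Y f ∧
    (∀ a X', FTrans 𝒞 a X X' → ∃ Y' f', FTrans 𝒟 a Y Y' ∧
      (X', Y', f') ∈ R ∧ {p ∈ f' | p.1 ∈ X} = f) ∧
    (∀ a Y', FTrans 𝒟 a Y Y' → ∃ X' f', FTrans 𝒞 a X X' ∧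
      (X', Y', f') ∈ R ∧ {p ∈ f' | p.1 ∈ X} = f) ∧
    (∀ a X', RTrans 𝒞 a X X' → ∃ Y' f', RTrans 𝒟 a Y Y' ∧
      (X', Y', f') ∈ R ∧ {p ∈ f | p.1 ∈ X'} = f')

end CS

/-!
Induct on the size of the step. A step `X —A→ X'` whose events are pairwise concurrent can be
sequentialised by adding, last, a new event `f` of least depth: removing the maximal event `f`
leaves a smaller step, in which no remaining new event loses depth because `f` is not among its
causes. The RDB matches the smaller step (by induction) and then the single transition of `f`,
with the same label and depth `k`. The event `g` matched to `f` cannot be caused by an event `h`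
added before it, since `h` has depth at least `k` and so would push the depth of `g` above `k`;
hence the matched events are again pairwise concurrent. This is why the induction carries a lower
bound on the depths of the new events on both sides. Reverse steps are handled in the same way,
removing an event of least depth first.
-/

namespace CS

section Causality

variable {E : Type u} {L : Type v} {𝒞 : CS E L} {X Z : Set E} {a b c d e : E}

theorem le.anti (hZX : Z ⊆ X) (h : 𝒞.le X d e) : 𝒞.le Z d e :=
  fun Y hY hYZ he => h Y hY (hYZ.trans hZX) he

theorem lt.anti (hZX : Z ⊆ X) (h : 𝒞.lt X d e) : 𝒞.lt Z d e :=
  ⟨h.1.anti hZX, h.2⟩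

theorem co.mono (hZX : Z ⊆ X) (h : 𝒞.co Z d e) : 𝒞.co X d e :=
  ⟨fun h' => h.1 (h'.anti hZX), fun h' => h.2 (h'.anti hZX)⟩

theorem co.symm (h : 𝒞.co X d e) : 𝒞.co X e d :=
  ⟨h.2, h.1⟩

theorem co_refl (X : Set E) (e : E) : 𝒞.co X e e :=
  ⟨fun h => h.2 rfl, fun h => h.2 rfl⟩

theorem le.mono_of_mem (h : 𝒞.le Z d e) (h𝒞 : 𝒞.IsStable) (hX : X ∈ 𝒞.C) (hZ : Z ∈ 𝒞.C)
    (hZX : Z ⊆ X) (he : e ∈ Z) : 𝒞.le X d e := fun Y hY hYX heY =>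
  (h (Y ∩ Z) (h𝒞.2.2.2 Y hY Z hZ X hX (Set.union_subset hYX hZX)) Set.inter_subset_right
    ⟨heY, he⟩).1

theorem lt.mono_of_mem (h : 𝒞.lt Z d e) (h𝒞 : 𝒞.IsStable) (hX : X ∈ 𝒞.C) (hZ : Z ∈ 𝒞.C)
    (hZX : Z ⊆ X) (he : e ∈ Z) : 𝒞.lt X d e :=
  ⟨h.1.mono_of_mem h𝒞 hX hZ hZX he, h.2⟩

theorem co.anti_of_mem (h : 𝒞.co X d e) (h𝒞 : 𝒞.IsStable) (hX : X ∈ 𝒞.C) (hZ : Z ∈ 𝒞.C)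
    (hZX : Z ⊆ X) (hd : d ∈ Z) (he : e ∈ Z) : 𝒞.co Z d e :=
  ⟨fun h' => h.1 (h'.mono_of_mem h𝒞 hX hZ hZX he),
    fun h' => h.2 (h'.mono_of_mem h𝒞 hX hZ hZX hd)⟩

theorem exists_subset_sdiff_singleton_mem (h𝒞 : 𝒞.IsStable) (hX : X ∈ 𝒞.C) (he : e ∈ X) :
    ∃ Y ∈ 𝒞.C, Y ⊆ X ∧ e ∈ Y ∧ Y \ {e} ∈ 𝒞.C := by
  induction hn : X.ncard using Nat.strong_induction_on generalizing X with
  | _ n ih =>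
  obtain ⟨f, hf, hXf⟩ := h𝒞.2.1 X hX (Set.nonempty_iff_ne_empty.mp ⟨e, he⟩)
  obtain rfl | hfe := eq_or_ne f e
  · exact ⟨X, hX, subset_rfl, he, hXf⟩
  · obtain ⟨Y, hY, hYX, heY, hYe⟩ :=
      ih _ (hn ▸ Set.ncard_sdiff_singleton_lt_of_mem hf (𝒞.finite X hX)) hXf ⟨he, hfe.symm⟩ rfl
    exact ⟨Y, hY, hYX.trans Set.sdiff_subset, heY, hYe⟩

theorem le.antisymm (hde : 𝒞.le X d e) (hed : 𝒞.le X e d) (h𝒞 : 𝒞.IsStable) (hX : X ∈ 𝒞.C)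
    (he : e ∈ X) : d = e := by
  by_contra hne
  obtain ⟨Y, hY, hYX, heY, hYe⟩ := exists_subset_sdiff_singleton_mem h𝒞 hX he
  exact (hed _ hYe (Set.sdiff_subset.trans hYX) ⟨hde Y hY hYX heY, hne⟩).2 rfl

theorem lt.trans (h₁ : 𝒞.lt X a b) (h₂ : 𝒞.lt X b c) (h𝒞 : 𝒞.IsStable) (hX : X ∈ 𝒞.C)
    (hb : b ∈ X) : 𝒞.lt X a c := by
  refine ⟨fun Y hY hYX hc => h₁.1 Y hY hYX (h₂.1 Y hY hYX hc), ?_⟩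
  rintro rfl
  exact h₁.2 (h₁.1.antisymm h₂.1 h𝒞 hX hb)

theorem sdiff_singleton_mem_of_maximal (h𝒞 : 𝒞.IsStable) (hX : X ∈ 𝒞.C)
    (hmax : ∀ d ∈ X, ¬ 𝒞.lt X e d) : X \ {e} ∈ 𝒞.C := by
  suffices ∃ Y ∈ 𝒞.C, X \ {e} ⊆ Y ∧ Y ⊆ X \ {e} by
    obtain ⟨Y, hY, h₁, h₂⟩ := this
    rwa [h₂.antisymm h₁] at hY
  refine Set.Finite.induction_on_subset (motive := fun t _ => ∃ Y ∈ 𝒞.C, t ⊆ Y ∧ Y ⊆ X \ {e})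
    _ (𝒞.finite X hX).sdiff ⟨∅, h𝒞.1, subset_rfl, Set.empty_subset _⟩ ?_
  rintro a t ⟨ha, hae⟩ - - ⟨Y, hY, htY, hYX⟩
  obtain ⟨Ya, hYa, hYaX, haYa, heYa⟩ : ∃ Ya ∈ 𝒞.C, Ya ⊆ X ∧ a ∈ Ya ∧ e ∉ Ya := by
    have : ¬ 𝒞.le X e a := fun h => hmax a ha ⟨h, fun h => hae h.symm⟩
    simpa [CS.le] using this
  refine ⟨Y ∪ Ya, h𝒞.2.2.1 Y hY Ya hYa X hX (Set.union_subset (hYX.trans Set.sdiff_subset) hYaX),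
    Set.insert_subset (Or.inr haYa) (htY.trans Set.subset_union_left),
    Set.union_subset hYX fun x hx => ⟨hYaX hx, ?_⟩⟩
  rintro rfl
  exact heYa hx

end Causality

section Depth

variable {E : Type u} {L : Type v} {𝒞 : CS E L} {X Z : Set E} {d e : E}

def chainLengths (𝒞 : CS E L) (X : Set E) (e : E) : Set ℕ :=
  {n | ∃ l : List E, l.length = n ∧ l.IsChain (𝒞.lt X) ∧ (∀ x ∈ l, x ∈ X) ∧ l.getLast? = some e}

theorem depth_eq_sSup_chainLengths : 𝒞.depth X e = sSup (𝒞.chainLengths X e) :=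
  rfl

theorem pairwise_lt_of_isChain (h𝒞 : 𝒞.IsStable) (hX : X ∈ 𝒞.C) {l : List E}
    (hl : l.IsChain (𝒞.lt X)) (hlX : ∀ x ∈ l, x ∈ X) : l.Pairwise (𝒞.lt X) := by
  let r : E → E → Prop := fun a b => 𝒞.lt X a b ∧ b ∈ X
  have : Trans r r r := ⟨fun h₁ h₂ => ⟨h₁.1.trans h₂.1 h𝒞 hX h₁.2, h₂.2⟩⟩
  exact ((hl.imp_of_mem_imp fun _ b _ hb h => ⟨h, hlX b hb⟩).pairwise (R := r)).imp And.left

theorem chainLengths_nonempty (he : e ∈ X) : (𝒞.chainLengths X e).Nonempty :=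
  ⟨1, [e], rfl, List.isChain_singleton e, by simpa using he, rfl⟩

theorem bddAbove_chainLengths (h𝒞 : 𝒞.IsStable) (hX : X ∈ 𝒞.C) (e : E) :
    BddAbove (𝒞.chainLengths X e) := by
  classical
  refine ⟨X.ncard, ?_⟩
  rintro _ ⟨l, rfl, hl, hlX, -⟩
  calc l.length = l.toFinset.card :=
        (List.toFinset_card_of_nodup ((pairwise_lt_of_isChain h𝒞 hX hl hlX).imp (·.2))).symm
    _ = (↑l.toFinset : Set E).ncard := (Set.ncard_coe_finset _).symm
    _ ≤ X.ncard :=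
        Set.ncard_le_ncard (fun x hx => hlX x (List.mem_toFinset.mp hx)) (𝒞.finite X hX)

theorem depth_mem_chainLengths (h𝒞 : 𝒞.IsStable) (hX : X ∈ 𝒞.C) (he : e ∈ X) :
    𝒞.depth X e ∈ 𝒞.chainLengths X e :=
  depth_eq_sSup_chainLengths ▸
    Nat.sSup_mem (chainLengths_nonempty he) (bddAbove_chainLengths h𝒞 hX e)

theorem depth_le_depth_of_subset (h𝒞 : 𝒞.IsStable) (hX : X ∈ 𝒞.C) (hZ : Z ∈ 𝒞.C)
    (hZX : Z ⊆ X) (he : e ∈ Z) : 𝒞.depth Z e ≤ 𝒞.depth X e := by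
  simp only [depth_eq_sSup_chainLengths]
  refine csSup_le_csSup (bddAbove_chainLengths h𝒞 hX e) (chainLengths_nonempty he) ?_
  rintro _ ⟨l, rfl, hl, hlZ, hlast⟩
  exact ⟨l, rfl, hl.imp_of_mem_imp fun _ b _ hb h => h.mono_of_mem h𝒞 hX hZ hZX (hlZ b hb),
    fun x hx => hZX (hlZ x hx), hlast⟩

theorem depth_le_depth_of_lt_imp_mem (h𝒞 : 𝒞.IsStable) (hX : X ∈ 𝒞.C) (hZ : Z ∈ 𝒞.C)
    (hZX : Z ⊆ X) (he : e ∈ Z) (hcauses : ∀ d ∈ X, 𝒞.lt X d e → d ∈ Z) :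
    𝒞.depth X e ≤ 𝒞.depth Z e := by
  simp only [depth_eq_sSup_chainLengths]
  refine csSup_le_csSup (bddAbove_chainLengths h𝒞 hZ e) (chainLengths_nonempty (hZX he)) ?_
  rintro _ ⟨l, rfl, hl, hlX, hlast⟩
  refine ⟨l, rfl, hl.imp fun _ _ h => h.anti hZX, ?_, hlast⟩
  obtain ⟨l', rfl⟩ := List.getLast?_eq_some_iff.mp hlast
  have hcause := (List.pairwise_append.mp (pairwise_lt_of_isChain h𝒞 hX hl hlX)).2.2
  intro x hx
  rcases List.mem_append.mp hx with hx | hx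
  · exact hcauses x (hlX x (List.mem_append_left _ hx)) (hcause x hx e (List.mem_singleton_self e))
  · rwa [List.mem_singleton.mp hx]

theorem depth_lt_depth_of_lt (h𝒞 : 𝒞.IsStable) (hX : X ∈ 𝒞.C) (hd : d ∈ X) (he : e ∈ X)
    (h : 𝒞.lt X d e) : 𝒞.depth X d < 𝒞.depth X e := by
  obtain ⟨l, hlen, hl, hlX, hlast⟩ := depth_mem_chainLengths h𝒞 hX hd
  rw [← hlen, depth_eq_sSup_chainLengths]
  refine Nat.lt_of_succ_le
    (le_csSup (bddAbove_chainLengths h𝒞 hX e) ⟨l ++ [e], by simp, ?_, ?_, ?_⟩)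
  · exact List.isChain_append.mpr ⟨hl, List.isChain_singleton e, by simp [hlast, h]⟩
  · simpa [or_imp, forall_and, he] using hlX
  · simp

end Depth

section Step

variable {E : Type u} {L : Type v} {𝒞 : CS E L} {A : Multiset L} {W Z Z' : Set E} {a : L} {k : ℕ}

theorem Step.refl (hW : W ∈ 𝒞.C) : 𝒞.Step 0 W W :=
  ⟨hW, hW, subset_rfl, ∅, by simp, by simp, rfl⟩

theorem Step.eq_of_zero (h : 𝒞.Step 0 W Z) : Z = W := by
  obtain ⟨-, -, hWZ, F, hF, -, hF0⟩ := h
  obtain rfl : F = ∅ := by simpa using hF0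
  exact (Set.sdiff_eq_empty.mp (by simpa using hF.symm)).antisymm hWZ

theorem Step.exists_fTransD [DecidableEq L] (h : 𝒞.Step A W Z) (h𝒞 : 𝒞.IsStable) (hA : A ≠ 0) :
    ∃ f ∈ Z \ W, 𝒞.label f ∈ A ∧ 𝒞.Step (A.erase (𝒞.label f)) W (Z \ {f}) ∧
      (∀ e ∈ (Z \ {f}) \ W, 𝒞.depth Z f ≤ 𝒞.depth (Z \ {f}) e) ∧
      𝒞.FTransD (𝒞.label f) (𝒞.depth Z f) (Z \ {f}) Z := by
  classical
  obtain ⟨hW, hZ, hWZ, F, hF, hco, rfl⟩ := h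
  have memF {x : E} : x ∈ F ↔ x ∈ Z \ W := by rw [← Finset.mem_coe, hF]
  have hFne : F.Nonempty := Finset.nonempty_iff_ne_empty.mpr (by simpa using hA)
  obtain ⟨f, hfF, hfmin⟩ := F.exists_min_image (𝒞.depth Z) hFne
  have hf : f ∈ Z \ W := memF.mp hfF
  have hmax : ∀ d ∈ Z, ¬ 𝒞.lt Z f d := fun d hd hlt => by
    by_cases hdW : d ∈ W
    · exact hf.2 (hlt.1 W hW hWZ hdW)
    · exact (hco f hfF d (memF.mpr ⟨hd, hdW⟩)).1 hlt
  have hZf : Z \ {f} ∈ 𝒞.C := sdiff_singleton_mem_of_maximal h𝒞 hZ hmax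
  have memF' {x : E} : x ∈ F.erase f ↔ x ∈ (Z \ {f}) \ W := by
    rw [← Finset.mem_coe, Finset.coe_erase, hF, Set.sdiff_sdiff_comm]
  refine ⟨f, hf, Multiset.mem_map_of_mem _ hfF, ⟨hW, hZf, ?_, F.erase f, ?_, ?_, ?_⟩, ?_,
    hZf, hZ, Set.sdiff_subset, f, Set.sdiff_sdiff_cancel_left (Set.singleton_subset_iff.mpr hf.1),
    rfl, rfl⟩
  · exact fun x hx => ⟨hWZ hx, fun hxf => hf.2 (Set.mem_singleton_iff.mp hxf ▸ hx)⟩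
  · ext x
    exact memF'
  · intro d hd e he
    exact (hco d (Finset.mem_of_mem_erase hd) e (Finset.mem_of_mem_erase he)).anti_of_mem h𝒞 hZ
      hZf Set.sdiff_subset (memF'.mp hd).1 (memF'.mp he).1
  · exact Multiset.map_erase_of_mem _ _ hfF
  · intro e he
    have heF : e ∈ F := Finset.mem_of_mem_erase (memF'.mpr he)
    refine (hfmin e heF).trans (depth_le_depth_of_lt_imp_mem h𝒞 hZ hZf Set.sdiff_subset he.1 ?_)
    exact fun d hd hlt => ⟨hd, fun hdf => (hco f hfF e heF).1 (Set.mem_singleton_iff.mp hdf ▸ hlt)⟩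

theorem Step.cons_of_fTransD (h : 𝒞.Step A W Z) (h𝒞 : 𝒞.IsStable)
    (hk : ∀ e ∈ Z \ W, k ≤ 𝒞.depth Z e) (ht : 𝒞.FTransD a k Z Z') :
    𝒞.Step (a ::ₘ A) W Z' ∧ ∀ e ∈ Z' \ W, k ≤ 𝒞.depth Z' e := by
  classical
  obtain ⟨hW, hZ, hWZ, G, hG, hco, rfl⟩ := h
  obtain ⟨-, hZ', hZZ', g, hg, rfl, rfl⟩ := ht
  have hgZ : g ∉ Z := (hg.symm ▸ Set.mem_singleton g : g ∈ Z' \ Z).2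
  obtain rfl : Z' = insert g Z := by
    rw [← Set.sdiff_union_of_subset hZZ', hg, Set.singleton_union]
  have hgW : g ∉ W := fun hgW => hgZ (hWZ hgW)
  have hdepth : ∀ e ∈ insert g Z \ W, 𝒞.depth (insert g Z) g ≤ 𝒞.depth (insert g Z) e := by
    rintro e ⟨rfl | heZ, heW⟩
    · exact le_rfl
    · exact (hk e ⟨heZ, heW⟩).trans
        (depth_le_depth_of_subset h𝒞 hZ' hZ (Set.subset_insert g Z) heZ)
  have memG {x : E} : x ∈ G ↔ x ∈ Z \ W := by rw [← Finset.mem_coe, hG]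
  have hco_g : ∀ e ∈ G, 𝒞.co (insert g Z) g e := by
    intro e he
    have he' := memG.mp he
    refine ⟨fun hlt => hgZ (hlt.1 Z hZ (Set.subset_insert g Z) he'.1), fun hlt => ?_⟩
    exact (hdepth e ⟨Or.inr he'.1, he'.2⟩).not_gt
      (depth_lt_depth_of_lt h𝒞 hZ' (Or.inr he'.1) (Or.inl rfl) hlt)
  refine ⟨⟨hW, hZ', hWZ.trans (Set.subset_insert g Z), insert g G, ?_, ?_, ?_⟩, hdepth⟩
  · rw [Finset.coe_insert, hG, Set.insert_sdiff_of_notMem _ hgW]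
  · simp only [Finset.forall_mem_insert]
    exact ⟨⟨co_refl _ _, hco_g⟩,
      fun d hd => ⟨(hco_g d hd).symm, fun e he => (hco d hd e he).mono (Set.subset_insert g Z)⟩⟩
  · rw [Finset.insert_val_of_notMem fun hg' => hgZ (memG.mp hg').1, Multiset.map_cons]

end Step

section Bisimulation

variable {E₁ E₂ : Type u} {L : Type v} {𝒞 : CS E₁ L} {𝒟 : CS E₂ L}
  {R : Set E₁ → Set E₂ → Prop}

theorem IsRDB.symm (h : IsRDB 𝒞 𝒟 R) : IsRDB 𝒟 𝒞 (fun Y X => R X Y) :=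
  ⟨⟨⟨h.1.1.1, fun Y X hXY => (h.1.1.2 X Y hXY).symm⟩, fun Y X hXY => (h.1.2 X Y hXY).symm⟩,
    fun Y X hXY => (h.2 X Y hXY).symm⟩

theorem IsRDB.exists_step [DecidableEq L] (hR : IsRDB 𝒞 𝒟 R) (h𝒞 : 𝒞.IsStable) (h𝒟 : 𝒟.IsStable)
    {A : Multiset L} {X X' : Set E₁} {Y : Set E₂} {m : ℕ} (hXY : R X Y) (hs : 𝒞.Step A X X')
    (hm : ∀ e ∈ X' \ X, m ≤ 𝒞.depth X' e) :
    ∃ Y', 𝒟.Step A Y Y' ∧ (∀ e ∈ Y' \ Y, m ≤ 𝒟.depth Y' e) ∧ R X' Y' := by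
  induction A using Multiset.strongInductionOn generalizing X' m with
  | ih A ih =>
  rcases eq_or_ne A 0 with rfl | hA
  · obtain rfl := hs.eq_of_zero
    exact ⟨Y, Step.refl (hR.1.1.2 _ Y hXY).2, by simp, hXY⟩
  obtain ⟨f, hf, hfA, hs₀, hk, ht⟩ := hs.exists_fTransD h𝒞 hA
  obtain ⟨Y₀, hsY, hkY, hR₀⟩ := ih _ (Multiset.erase_lt.mpr hfA) hs₀ hk
  obtain ⟨Y', htY, hR'⟩ := (hR.1.2 _ _ hR₀).1 _ _ _ ht
  obtain ⟨hsY', hkY'⟩ := hsY.cons_of_fTransD h𝒟 hkY htY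
  exact ⟨Y', Multiset.cons_erase hfA ▸ hsY', fun e he => (hm f hf).trans (hkY' e he), hR'⟩

theorem IsRDB.exists_rStep [DecidableEq L] (hR : IsRDB 𝒞 𝒟 R) (h𝒞 : 𝒞.IsStable) (h𝒟 : 𝒟.IsStable)
    {A : Multiset L} {X X' : Set E₁} {Y : Set E₂} {m : ℕ} (hXY : R X Y) (hs : 𝒞.Step A X' X)
    (hm : ∀ e ∈ X \ X', m ≤ 𝒞.depth X e) :
    ∃ Y', 𝒟.Step A Y' Y ∧ (∀ e ∈ Y \ Y', m ≤ 𝒟.depth Y e) ∧ R X' Y' := by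
  induction A using Multiset.strongInductionOn generalizing X Y m with
  | ih A ih =>
  rcases eq_or_ne A 0 with rfl | hA
  · obtain rfl := hs.eq_of_zero
    exact ⟨Y, Step.refl (hR.1.1.2 _ Y hXY).2, by simp, hXY⟩
  obtain ⟨f, hf, hfA, hs₀, hk, ht⟩ := hs.exists_fTransD h𝒞 hA
  obtain ⟨Y₀, htY, hR₀⟩ := (hR.2 _ _ hXY).1 _ _ _ ht
  obtain ⟨Y', hsY, hkY, hR'⟩ := ih _ (Multiset.erase_lt.mpr hfA) hR₀ hs₀ hk
  obtain ⟨hsY', hkY'⟩ := hsY.cons_of_fTransD h𝒟 hkY htY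
  exact ⟨Y', Multiset.cons_erase hfA ▸ hsY', fun e he => (hm f hf).trans (hkY' e he), hR'⟩

theorem IsRDB.isRSB (hR : IsRDB 𝒞 𝒟 R) (h𝒞 : 𝒞.IsStable) (h𝒟 : 𝒟.IsStable) :
    IsRSB 𝒞 𝒟 R := by
  classical
  refine ⟨⟨hR.1.1, fun X Y hXY => ⟨fun A X' hs => ?_, fun A Y' hs => ?_⟩⟩,
    fun X Y hXY => ⟨fun A X' hs => ?_, fun A Y' hs => ?_⟩⟩
  · exact (hR.exists_step h𝒞 h𝒟 hXY hs fun _ _ => Nat.zero_le _).imp fun _ h => ⟨h.1, h.2.2⟩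
  · exact (hR.symm.exists_step h𝒟 h𝒞 hXY hs fun _ _ => Nat.zero_le _).imp
      fun _ h => ⟨h.1, h.2.2⟩
  · exact (hR.exists_rStep h𝒞 h𝒟 hXY hs fun _ _ => Nat.zero_le _).imp fun _ h => ⟨h.1, h.2.2⟩
  · exact (hR.symm.exists_rStep h𝒟 h𝒞 hXY hs fun _ _ => Nat.zero_le _).imp
      fun _ h => ⟨h.1, h.2.2⟩

end Bisimulation

end CS

open CS

/-- every reverse depth-respecting bisimulation is a reverse step
bisimulation; hence RDB equivalence is included in RSB equivalence. -/
theorem stmt11 {E₁ E₂ : Type u} {L : Type v} (𝒞 : CS E₁ L) (𝒟 : CS E₂ L)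
    (h𝒞 : IsStable 𝒞) (h𝒟 : IsStable 𝒟) :
    (∀ R : Set E₁ → Set E₂ → Prop, IsRDB 𝒞 𝒟 R → IsRSB 𝒞 𝒟 R) ∧
    ((∃ R : Set E₁ → Set E₂ → Prop, IsRDB 𝒞 𝒟 R) →
      (∃ R : Set E₁ → Set E₂ → Prop, IsRSB 𝒞 𝒟 R)) :=
  ⟨fun _ hR => hR.isRSB h𝒞 h𝒟, fun ⟨_, hR⟩ => ⟨_, hR.isRSB h𝒞 h𝒟⟩⟩
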